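/- Fix n ≥ 1. Every maximal (for inclusion) adjacency-avoiding subset J of I_n can be written as J = J(B, E) for some complete shifted bipartition (B, E) of {1, …, n}. -/

import Mathlib

/-- `K` is an interval of `{1, …, n}`: a set `⟦i,j⟧ = {i, i+1, …, j}` with `1 ≤ i ≤ j ≤ n`. -/
def IsInterval (n : ℕ) (K : Set ℕ) : Prop :=
  ∃ i j, 1 ≤ i ∧ i ≤ j ∧ j ≤ n ∧ K = Set.Icc i j

/-- The lower bound `b(K)` of an interval `K`. -/
noncomputable def intB (K : Set ℕ) : ℕ := sInf K

/-- The upper bound `e(K)` of an interval `K`. -/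
noncomputable def intE (K : Set ℕ) : ℕ := sSup K

/-- `J(B, E)`: the set of intervals `K` of `{1, …, n}` with `b(K) ∈ B` and `e(K) ∈ E`. -/
def intervalsOf (n : ℕ) (B E : Set ℕ) : Set (Set ℕ) :=
  {K | IsInterval n K ∧ intB K ∈ B ∧ intE K ∈ E}

/-- Two intervals `K`, `L` are adjacent if `b(K) = e(L) + 1` or `b(L) = e(K) + 1`. -/
def Adjacent (K L : Set ℕ) : Prop :=
  intB K = intE L + 1 ∨ intB L = intE K + 1

/-- An interval set is adjacency-avoiding if it contains no pair of adjacent intervals. -/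
def AdjAvoiding (J : Set (Set ℕ)) : Prop :=
  ∀ K ∈ J, ∀ L ∈ J, ¬ Adjacent K L

/-- The shift `A[1] = {a + 1 : a ∈ A}` of a set of integers. -/
def shiftSet (A : Set ℕ) : Set ℕ := (· + 1) '' A

/-!
Take `B = b(J)` and `E = e(J)`. Adjacency-avoidance of `J` is exactly `B ∩ E[1] = ∅`.
Maximality says that an interval `K ∉ J` is adjacent to some interval of `J`, i.e.
`b(K) ∈ E[1]` or `e(K) + 1 ∈ B`. Applied to `⟦p, n⟧` and `⟦1, n⟧` this shows that `B ∪ E[1]`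
covers `{1, …, n+1}`; applied to an interval with `b(K) ∈ B`, `e(K) ∈ E` it contradicts
`B ∩ E[1] = ∅`, so `J(B, E) ⊆ J`.
-/

lemma intB_Icc {i j : ℕ} (h : i ≤ j) : intB (Set.Icc i j) = i := csInf_Icc h

lemma intE_Icc {i j : ℕ} (h : i ≤ j) : intE (Set.Icc i j) = j := csSup_Icc h

lemma shiftSet_subset_Icc {A : Set ℕ} {a b : ℕ} (h : A ⊆ Set.Icc a b) :
    shiftSet A ⊆ Set.Icc (a + 1) (b + 1) := by
  rintro _ ⟨x, hx, rfl⟩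
  obtain ⟨hax, hxb⟩ := h hx
  exact ⟨Nat.add_le_add_right hax 1, Nat.add_le_add_right hxb 1⟩

namespace IsInterval

variable {n : ℕ} {K : Set ℕ}

lemma bounds (h : IsInterval n K) : 1 ≤ intB K ∧ intB K ≤ intE K ∧ intE K ≤ n := by
  obtain ⟨i, j, h1, hij, hjn, rfl⟩ := h
  rw [intB_Icc hij, intE_Icc hij]
  exact ⟨h1, hij, hjn⟩

lemma Icc {i j : ℕ} (h1 : 1 ≤ i) (hij : i ≤ j) (hjn : j ≤ n) : IsInterval n (Set.Icc i j) :=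
  ⟨i, j, h1, hij, hjn, rfl⟩

lemma not_adjacent_self (h : IsInterval n K) : ¬ Adjacent K K := by
  have := h.bounds
  rintro (h | h) <;> omega

end IsInterval

lemma Adjacent.symm {K L : Set ℕ} (h : Adjacent K L) : Adjacent L K := Or.symm h

lemma AdjAvoiding.union_singleton {J : Set (Set ℕ)} {K : Set ℕ} (hJ : AdjAvoiding J)
    (hK : ¬ Adjacent K K) (hKJ : ∀ L ∈ J, ¬ Adjacent K L) : AdjAvoiding (J ∪ {K}) := by
  rintro L (hL | rfl) M (hM | rfl)
  · exact hJ L hL M hM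
  · exact fun h ↦ hKJ L hL h.symm
  · exact hKJ M hM
  · exact hK

lemma AdjAvoiding.disjoint_intB_shiftSet_intE {J : Set (Set ℕ)} (hJ : AdjAvoiding J) :
    Disjoint (intB '' J) (shiftSet (intE '' J)) := by
  rw [Set.disjoint_left]
  rintro _ ⟨K, hK, rfl⟩ ⟨_, ⟨L, hL, rfl⟩, h⟩
  exact hJ K hK L hL (Or.inl h.symm)

lemma image_intB_subset {n : ℕ} {J : Set (Set ℕ)} (hJint : ∀ K ∈ J, IsInterval n K) :
    intB '' J ⊆ Set.Icc 1 n := by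
  rintro _ ⟨K, hK, rfl⟩
  have := (hJint K hK).bounds
  exact ⟨by omega, by omega⟩

lemma image_intE_subset {n : ℕ} {J : Set (Set ℕ)} (hJint : ∀ K ∈ J, IsInterval n K) :
    intE '' J ⊆ Set.Icc 1 n := by
  rintro _ ⟨K, hK, rfl⟩
  have := (hJint K hK).bounds
  exact ⟨by omega, by omega⟩

section Maximal

variable {n : ℕ} {J : Set (Set ℕ)}

lemma exists_adjacent_of_notMem (hJ : AdjAvoiding J)
    (hmax : ∀ K : Set ℕ, IsInterval n K → K ∉ J → ¬ AdjAvoiding (J ∪ {K}))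
    {K : Set ℕ} (hK : IsInterval n K) (hKJ : K ∉ J) : ∃ L ∈ J, Adjacent K L := by
  by_contra! h
  exact hmax K hK hKJ (hJ.union_singleton hK.not_adjacent_self h)

lemma mem_or_intB_mem_shiftSet_or_intE_add_one_mem (hJ : AdjAvoiding J)
    (hmax : ∀ K : Set ℕ, IsInterval n K → K ∉ J → ¬ AdjAvoiding (J ∪ {K}))
    {K : Set ℕ} (hK : IsInterval n K) :
    K ∈ J ∨ intB K ∈ shiftSet (intE '' J) ∨ intE K + 1 ∈ intB '' J := by
  by_cases hKJ : K ∈ J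
  · exact Or.inl hKJ
  obtain ⟨L, hL, hadj | hadj⟩ := exists_adjacent_of_notMem hJ hmax hK hKJ
  · exact Or.inr (Or.inl ⟨intE L, ⟨L, hL, rfl⟩, hadj.symm⟩)
  · exact Or.inr (Or.inr ⟨L, hL, hadj⟩)

lemma Icc_subset_union_shiftSet (hn : 1 ≤ n) (hJint : ∀ K ∈ J, IsInterval n K)
    (hJ : AdjAvoiding J)
    (hmax : ∀ K : Set ℕ, IsInterval n K → K ∉ J → ¬ AdjAvoiding (J ∪ {K})) :
    Set.Icc 1 (n + 1) ⊆ intB '' J ∪ shiftSet (intE '' J) := by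
  have hB := image_intB_subset hJint
  have succ_notMem_B : n + 1 ∉ intB '' J := fun h ↦ by have := (hB h).2; omega
  rintro p ⟨hp1, hpn⟩
  obtain hpn' | rfl := hpn.lt_or_eq
  · rcases mem_or_intB_mem_shiftSet_or_intE_add_one_mem hJ hmax
      (IsInterval.Icc hp1 (Nat.lt_succ_iff.mp hpn') le_rfl) with h | h | h
    · exact Or.inl ⟨_, h, intB_Icc (by omega)⟩
    · exact Or.inr (by rwa [intB_Icc (by omega)] at h)
    · exact absurd (by rwa [intE_Icc (by omega)] at h) succ_notMem_B
  · -- `⟦1, n⟧` can be adjacent to nothing, so it lies in `J` and `n ∈ E`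
    rcases mem_or_intB_mem_shiftSet_or_intE_add_one_mem hJ hmax
      (IsInterval.Icc le_rfl hn le_rfl) with h | h | h
    · exact Or.inr ⟨n, ⟨_, h, intE_Icc hn⟩, rfl⟩
    · have := (shiftSet_subset_Icc (image_intE_subset hJint) h).1
      rw [intB_Icc hn] at this
      omega
    · exact absurd (by rwa [intE_Icc hn] at h) succ_notMem_B

lemma intervalsOf_image_intB_image_intE (hJint : ∀ K ∈ J, IsInterval n K)
    (hJ : AdjAvoiding J)
    (hmax : ∀ K : Set ℕ, IsInterval n K → K ∉ J → ¬ AdjAvoiding (J ∪ {K})) :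
    intervalsOf n (intB '' J) (intE '' J) = J := by
  ext K
  refine ⟨fun ⟨hK, hb, he⟩ ↦ ?_, fun hK ↦ ⟨hJint K hK, ⟨K, hK, rfl⟩, ⟨K, hK, rfl⟩⟩⟩
  have hdisj := Set.disjoint_left.mp hJ.disjoint_intB_shiftSet_intE
  rcases mem_or_intB_mem_shiftSet_or_intE_add_one_mem hJ hmax hK with h | h | h
  · exact h
  · exact absurd h (hdisj hb)
  · exact absurd ⟨_, he, rfl⟩ (hdisj h)

end Maximal

/-- Every maximal (for inclusion) adjacency-avoiding subset `J` of `I_n` is of the form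
`J(B, E)` for some complete shifted bipartition `(B, E)` of `{1, …, n}`. -/
theorem maximal_adjAvoiding_eq_complete_shifted_bipartition (n : ℕ) (hn : 1 ≤ n)
    (J : Set (Set ℕ))
    (hJint : ∀ K ∈ J, IsInterval n K)
    (hJ : AdjAvoiding J)
    (hmax : ∀ K : Set ℕ, IsInterval n K → K ∉ J → ¬ AdjAvoiding (J ∪ {K})) :
    ∃ B E : Set ℕ, B ⊆ Set.Icc 1 n ∧ E ⊆ Set.Icc 1 n ∧
      B ∪ shiftSet E = Set.Icc 1 (n + 1) ∧ B ∩ shiftSet E = ∅ ∧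
      J = intervalsOf n B E := by
  have hB := image_intB_subset hJint
  have hE := image_intE_subset hJint
  refine ⟨intB '' J, intE '' J, hB, hE, ?_, ?_, ?_⟩
  · exact (Set.union_subset (hB.trans (Set.Icc_subset_Icc le_rfl n.le_succ))
      ((shiftSet_subset_Icc hE).trans (Set.Icc_subset_Icc (by omega) le_rfl))).antisymm
      (Icc_subset_union_shiftSet hn hJint hJ hmax)
  · exact Set.disjoint_iff_inter_eq_empty.mp hJ.disjoint_intB_shiftSet_intE
  · exact (intervalsOf_image_intB_image_intE hJint hJ hmax).symm
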